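/- arXiv:1810.03878 — 2 statements merged into one kernel-verified Lean document; each statement's English description precedes it below -/
import Mathlib

section
/- Let F and G be skew-symmetric m×m matrices over F_q of the same rank, with char F_q ≠ 2. Then the number of skew-symmetric matrices A of rank at most 2t with tr(FA) ≠ 0 equals the number of skew-symmetric matrices A of rank at most 2t with tr(GA) ≠ 0. -/
open Matrix
def IsSkewSym {K : Type} [Field K] {m : ℕ} (A : Matrix (Fin m) (Fin m) K) : Prop :=
  Aᵀ = -A ∧ ∀ i, A i i = 0

def Estd (K : Type) [Field K] (k m : ℕ) : Matrix (Fin m) (Fin m) K :=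
  Matrix.of fun i j =>
    if j.val = i.val + 1 ∧ i.val % 2 = 0 ∧ j.val < 2*k then 1
    else if i.val = j.val + 1 ∧ j.val % 2 = 0 ∧ i.val < 2*k then -1 else 0

noncomputable def na (K : Type) [Field K] (r m : ℕ) : ℕ :=
  Nat.card {A : Matrix (Fin m) (Fin m) K // IsSkewSym A ∧ A.rank = r}

noncomputable def Na (K : Type) [Field K] (r m : ℕ) : ℕ :=
  Nat.card {A : Matrix (Fin m) (Fin m) K // IsSkewSym A ∧ A.rank ≤ r}

noncomputable def wSmall (K : Type) [Field K] (k r m : ℕ) : ℕ :=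
  Nat.card {A : Matrix (Fin m) (Fin m) K //
    IsSkewSym A ∧ A.rank = 2*r ∧ Matrix.trace (Estd K k m * A) ≠ 0}

noncomputable def Wcap (K : Type) [Field K] (k t m : ℕ) : ℕ :=
  Nat.card {A : Matrix (Fin m) (Fin m) K //
    IsSkewSym A ∧ A.rank ≤ 2*t ∧ Matrix.trace (Estd K k m * A) ≠ 0}

noncomputable def projWt (K : Type) [Field K] (m t : ℕ)
    (φ : Matrix (Fin m) (Fin m) K →ₗ[K] K) : ℕ :=
  Nat.card {x : Projectivization K (Matrix (Fin m) (Fin m) K) //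
    ∃ (A : Matrix (Fin m) (Fin m) K) (h : A ≠ 0),
      x = Projectivization.mk K A h ∧ IsSkewSym A ∧ A.rank ≤ 2*t ∧ φ A ≠ 0}

/-!
A skew-symmetric matrix with zero diagonal is the Gram matrix of an alternating form. Splitting
off hyperbolic planes until the form vanishes gives a basis in which its Gram matrix is
`Estd K k m`, and `k` is pinned down by `rank = 2 * k`; so `F` and `G` are congruent to the same
`Estd K k m`. Congruence `A ↦ Rᵀ * A * R` by an invertible `R` permutes the skew-symmetric
matrices, preserves rank and turns `trace (F * A)` into `trace (R * F * Rᵀ * A)`, so the count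
only depends on the congruence class of `F`.
-/

section Estd

variable {K : Type} [Field K]

theorem estd_zero (n : ℕ) : Estd K 0 n = 0 := by
  ext i j
  simp [Estd]

theorem estd_succ (k n : ℕ) :
    Estd K (k + 1) (2 + n) =
      reindex finSumFinEquiv finSumFinEquiv (fromBlocks !![0, 1; -1, 0] 0 0 (Estd K k n)) := by
  ext i j
  induction i using Fin.addCases <;> induction j using Fin.addCases <;>
    simp only [reindex_apply, submatrix_apply, finSumFinEquiv_symm_apply_castAdd,
      finSumFinEquiv_symm_apply_natAdd, fromBlocks_apply₁₁, fromBlocks_apply₁₂,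
      fromBlocks_apply₂₁, fromBlocks_apply₂₂, Matrix.zero_apply]
  case left.left i j => fin_cases i <;> fin_cases j <;> simp [Estd] <;> omega
  all_goals
    simp only [Estd, of_apply, Fin.val_castAdd, Fin.val_natAdd]
    split_ifs <;> first | rfl | omega

-- The nonzero entries of `Estd K k m` sit exactly at the positions `(i, estdPartner k m h i)`
-- with `i < 2 * k`.
def estdPartner (k m : ℕ) (h : 2 * k ≤ m) : Equiv.Perm (Fin m) :=
  Function.Involutive.toPerm
    (fun i => ⟨if i.val < 2 * k then (if i.val % 2 = 0 then i.val + 1 else i.val - 1) else i.val,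
      by split_ifs <;> omega⟩)
    (fun i => by ext; dsimp only; split_ifs <;> omega)

theorem estdPartner_val (k m : ℕ) (h : 2 * k ≤ m) (i : Fin m) :
    (estdPartner k m h i).val =
      if i.val < 2 * k then (if i.val % 2 = 0 then i.val + 1 else i.val - 1) else i.val :=
  rfl

theorem estd_eq_submatrix (k m : ℕ) (h : 2 * k ≤ m) :
    Estd K k m = (diagonal fun i : Fin m =>
      if i.val < 2 * k then (if i.val % 2 = 0 then 1 else -1) else 0).submatrix id
        (estdPartner k m h) := by
  ext i j
  simp only [Estd, of_apply, submatrix_apply, diagonal_apply, id, Fin.ext_iff, estdPartner_val]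
  split_ifs <;> first | rfl | omega

theorem rank_estd (k m : ℕ) (h : 2 * k ≤ m) : (Estd K k m).rank = 2 * k := by
  classical
  rw [estd_eq_submatrix k m h, ← Equiv.coe_refl, rank_submatrix, rank_diagonal]
  have hne : ∀ i : Fin m,
      (if i.val < 2 * k then (if i.val % 2 = 0 then (1 : K) else -1) else 0) ≠ 0 ↔
        i.val < 2 * k := by
    intro i
    split_ifs <;> simp_all
  simp only [Fintype.card_subtype, hne, Fin.card_filter_val_lt, min_eq_right h]

end Estd

namespace LinearMap.BilinForm

section

variable {K V : Type*} [Field K] [AddCommGroup V] [Module K V] {B : LinearMap.BilinForm K V}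

theorem exists_apply_eq_one_of_ne_zero (hB : B ≠ 0) : ∃ u v, B u v = 1 := by
  obtain ⟨u, v, huv⟩ : ∃ u v, B u v ≠ 0 := by
    by_contra! h
    exact hB (ext h)
  exact ⟨u, (B u v)⁻¹ • v, by rw [map_smul, smul_eq_mul, inv_mul_cancel₀ huv]⟩

theorem IsAlt.linearIndependent_pair (hB : B.IsAlt) {u v : V} (huv : B u v = 1) :
    LinearIndependent K ![u, v] := by
  refine LinearIndependent.pair_iff.mpr fun s t hst => ⟨?_, ?_⟩
  · simpa [hB.self_eq_zero, huv] using congrArg (B · v) hst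
  · simpa [hB.self_eq_zero, ← hB.neg_eq u v, huv] using congrArg (B · u) hst

theorem IsAlt.isCompl_span_pair_orthogonal [FiniteDimensional K V] (hB : B.IsAlt) {u v : V}
    (huv : B u v = 1) :
    IsCompl (Submodule.span K (Set.range ![u, v]))
      (B.orthogonal (Submodule.span K (Set.range ![u, v]))) := by
  classical
  have hli := hB.linearIndependent_pair huv
  refine isCompl_orthogonal_of_restrict_nondegenerate hB.isRefl
    ((nondegenerate_iff_det_ne_zero (Module.Basis.span hli)).mpr ?_)
  have hgram : toMatrix (Module.Basis.span hli) (B.restrict _) = !![0, 1; -1, 0] := by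
    ext i j
    fin_cases i <;> fin_cases j <;>
      simp [toMatrix_apply, Module.Basis.span_apply, hB.self_eq_zero, huv, ← hB.neg_eq u v]
  simp [hgram]

end

theorem IsAlt.exists_basis_estd {K : Type} {V : Type*} [Field K] [AddCommGroup V] [Module K V]
    [FiniteDimensional K V] {B : LinearMap.BilinForm K V} (hB : B.IsAlt) {n : ℕ}
    (hn : Module.finrank K V = n) :
    ∃ k, 2 * k ≤ n ∧
      ∃ b : Module.Basis (Fin n) K V, ∀ i j, B (b i) (b j) = Estd K k n i j := by
  induction n using Nat.strong_induction_on generalizing V with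
  | _ n ih =>
  by_cases hB0 : B = 0
  · exact ⟨0, by omega, Module.finBasisOfFinrankEq K V hn, by simp [hB0, estd_zero]⟩
  obtain ⟨u, v, huv⟩ := exists_apply_eq_one_of_ne_zero hB0
  have hli := hB.linearIndependent_pair huv
  have hcompl := hB.isCompl_span_pair_orthogonal huv
  set W := Submodule.span K (Set.range ![u, v])
  have hdim := Submodule.finrank_add_eq_of_isCompl hcompl
  rw [finrank_span_eq_card hli, Fintype.card_fin, hn] at hdim
  obtain ⟨n, rfl⟩ : ∃ n', n = 2 + n' := ⟨_, hdim.symm⟩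
  obtain ⟨k, hk, c, hc⟩ :=
    ih n (by omega) (B := B.restrict (B.orthogonal W)) (fun x => hB x) (by omega)
  have hW : ∀ x, ![u, v] x ∈ W := fun x => Submodule.subset_span ⟨x, rfl⟩
  refine ⟨k + 1, by omega, (((Module.Basis.span hli).prod c).map
    (Submodule.prodEquivOfIsCompl _ _ hcompl)).reindex finSumFinEquiv, fun i j => ?_⟩
  obtain ⟨x, rfl⟩ := finSumFinEquiv.surjective i
  obtain ⟨y, rfl⟩ := finSumFinEquiv.surjective j
  rw [estd_succ]
  rcases x with x | x <;> rcases y with y | y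
  · fin_cases x <;> fin_cases y <;>
      simp [Module.Basis.span_apply, hB.self_eq_zero, huv, ← hB.neg_eq u v]
  · simpa [Module.Basis.span_apply] using (c y).2 _ (hW x)
  · simpa [Module.Basis.span_apply, hB.eq_iff] using (c x).2 _ (hW y)
  · simpa using hc x y

end LinearMap.BilinForm

namespace IsSkewSym

variable {K : Type} [Field K] {m : ℕ} {A : Matrix (Fin m) (Fin m) K}

/- Writing `A = U - Uᵀ` with `U` strictly upper triangular avoids dividing by `2`. -/
theorem dotProduct_mulVec_self (hA : IsSkewSym A) (x : Fin m → K) : x ⬝ᵥ A *ᵥ x = 0 := by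
  let U : Matrix (Fin m) (Fin m) K := of fun i j => if i < j then A i j else 0
  have hU : A = U - Uᵀ := by
    ext i j
    rcases lt_trichotomy i j with h | rfl | h
    · simp [U, h, h.not_gt]
    · simp [U, hA.2]
    · simpa [U, h, h.not_gt] using congrFun₂ hA.1 j i
  rw [hU, sub_mulVec, dotProduct_sub, dotProduct_mulVec x Uᵀ, vecMul_transpose,
    dotProduct_comm (U *ᵥ x), sub_self]

theorem transpose_mul_mul (hA : IsSkewSym A) (R : Matrix (Fin m) (Fin m) K) :
    IsSkewSym (Rᵀ * A * R) := by
  refine ⟨?_, fun i => ?_⟩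
  · simp [transpose_mul, hA.1, Matrix.mul_assoc]
  · rw [mul_mul_apply, hA.dotProduct_mulVec_self]

theorem exists_isUnit_mul_mul_transpose_eq_estd (hA : IsSkewSym A) :
    ∃ k, 2 * k ≤ m ∧
      ∃ M : Matrix (Fin m) (Fin m) K, IsUnit M.det ∧ M * A * Mᵀ = Estd K k m := by
  have halt : LinearMap.BilinForm.IsAlt (toLinearMap₂' K A) := fun x => by
    rw [toLinearMap₂'_apply']
    exact hA.dotProduct_mulVec_self x
  obtain ⟨k, hk, b, hb⟩ := halt.exists_basis_estd (Module.finrank_fin_fun K)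
  refine ⟨k, hk, of b,
    (isUnit_iff_isUnit_det _).mp (linearIndependent_rows_iff_isUnit.mp b.linearIndependent), ?_⟩
  ext i j
  rw [mul_mul_apply, transpose_transpose, ← hb, toLinearMap₂'_apply']
  rfl

end IsSkewSym

section Congruence

variable {K : Type} [Field K] {m : ℕ}

theorem rank_mul_mul_of_isUnit_det {P Q : Matrix (Fin m) (Fin m) K} (hP : IsUnit P.det)
    (hQ : IsUnit Q.det) (A : Matrix (Fin m) (Fin m) K) : (P * A * Q).rank = A.rank := by
  rw [rank_mul_eq_left_of_isUnit_det _ _ hQ, rank_mul_eq_right_of_isUnit_det _ _ hP]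

theorem card_trace_mul_mul_transpose {R : Matrix (Fin m) (Fin m) K} (hR : IsUnit R.det)
    (F : Matrix (Fin m) (Fin m) K) (r : ℕ) :
    Nat.card {A : Matrix (Fin m) (Fin m) K //
        IsSkewSym A ∧ A.rank ≤ r ∧ trace (R * F * Rᵀ * A) ≠ 0}
      = Nat.card {A : Matrix (Fin m) (Fin m) K //
        IsSkewSym A ∧ A.rank ≤ r ∧ trace (F * A) ≠ 0} := by
  have hRt := isUnit_det_transpose R hR
  let e : Matrix (Fin m) (Fin m) K ≃ Matrix (Fin m) (Fin m) K :=
    { toFun := fun A => Rᵀ * A * R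
      invFun := fun A => R⁻¹ᵀ * A * R⁻¹
      left_inv := fun A => by
        simp only [transpose_nonsing_inv, Matrix.mul_assoc, mul_nonsing_inv _ hR, Matrix.mul_one,
          nonsing_inv_mul_cancel_left _ _ hRt]
      right_inv := fun A => by
        simp only [transpose_nonsing_inv, Matrix.mul_assoc, nonsing_inv_mul _ hR, Matrix.mul_one,
          mul_nonsing_inv_cancel_left _ _ hRt] }
  refine Nat.card_congr (e.subtypeEquiv fun A => ?_)
  have hskew : IsSkewSym (Rᵀ * A * R) ↔ IsSkewSym A :=
    ⟨fun h => e.left_inv A ▸ h.transpose_mul_mul R⁻¹, fun h => h.transpose_mul_mul R⟩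
  have htrace : trace (F * (Rᵀ * A * R)) = trace (R * F * Rᵀ * A) := by
    rw [← Matrix.mul_assoc, ← Matrix.mul_assoc, trace_mul_comm]
    simp only [Matrix.mul_assoc]
  simp only [e, Equiv.coe_fn_mk, hskew, rank_mul_mul_of_isUnit_det hRt hR, htrace]

end Congruence

theorem stmt7_general (K : Type) [Field K]
    (m t : ℕ)
    (F G : Matrix (Fin m) (Fin m) K) (hF : IsSkewSym F) (hG : IsSkewSym G)
    (hrank : F.rank = G.rank) :
    Nat.card {A : Matrix (Fin m) (Fin m) K //
        IsSkewSym A ∧ A.rank ≤ 2*t ∧ Matrix.trace (F * A) ≠ 0}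
      = Nat.card {A : Matrix (Fin m) (Fin m) K //
        IsSkewSym A ∧ A.rank ≤ 2*t ∧ Matrix.trace (G * A) ≠ 0} := by
  obtain ⟨k, hk, M, hM, hMF⟩ := hF.exists_isUnit_mul_mul_transpose_eq_estd
  obtain ⟨l, hl, N, hN, hNG⟩ := hG.exists_isUnit_mul_mul_transpose_eq_estd
  have hkl : k = l := by
    have hF' := rank_mul_mul_of_isUnit_det hM (isUnit_det_transpose M hM) F
    have hG' := rank_mul_mul_of_isUnit_det hN (isUnit_det_transpose N hN) G
    rw [hMF, rank_estd k m hk] at hF'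
    rw [hNG, rank_estd l m hl] at hG'
    omega
  rw [← card_trace_mul_mul_transpose hM F, hMF, hkl, ← hNG, card_trace_mul_mul_transpose hN G]

theorem stmt7 (K : Type) [Field K] [Fintype K] (hchar : ringChar K ≠ 2)
    (m t : ℕ) (ht : 2*t ≤ m)
    (F G : Matrix (Fin m) (Fin m) K) (hF : IsSkewSym F) (hG : IsSkewSym G)
    (hrank : F.rank = G.rank) :
    Nat.card {A : Matrix (Fin m) (Fin m) K //
        IsSkewSym A ∧ A.rank ≤ 2*t ∧ Matrix.trace (F * A) ≠ 0}
      = Nat.card {A : Matrix (Fin m) (Fin m) K //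
        IsSkewSym A ∧ A.rank ≤ 2*t ∧ Matrix.trace (G * A) ≠ 0} :=
  stmt7_general K m t F G hF hG hrank
end

section
/- The number n_a(2r, m) of m×m skew-symmetric matrices of rank exactly 2r over F_q is given, for r ≥ 1, by n_a(2r,m) = q^{r(r-1)} ∏_{i=0}^{2r-1}(q^{m-i}-1) / ∏_{i=0}^{r-1}(q^{2(r-i)}-1). -/
open Matrix
namespace SkewCount

variable {K : Type} [Field K] {m : ℕ}

lemma skew_apply {A : Matrix (Fin m) (Fin m) K} (hA : IsSkewSym A) (i j : Fin m) :
    A j i = -A i j := by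
  have := congrFun (congrFun hA.1 i) j
  simpa [Matrix.transpose_apply] using this

lemma skew_dot {A : Matrix (Fin m) (Fin m) K} (hA : IsSkewSym A) (x : Fin m → K) :
    x ⬝ᵥ (A *ᵥ x) = 0 := by
  have expand : x ⬝ᵥ (A *ᵥ x) = ∑ p ∈ (Finset.univ ×ˢ Finset.univ : Finset (Fin m × Fin m)),
      x p.1 * A p.1 p.2 * x p.2 := by
    rw [Finset.sum_product]
    simp [dotProduct, Matrix.mulVec, Finset.mul_sum, mul_assoc]
  rw [expand]
  refine Finset.sum_involution (fun p _ => (p.2, p.1)) ?_ ?_ (by simp) (by simp)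
  · intro p _
    rw [skew_apply hA p.1 p.2]; ring
  · rintro ⟨i, j⟩ _ hf hc
    simp only [Prod.mk.injEq] at hc
    apply hf
    rw [hc.1]
    simp [hA.2]

/-- dot product as a bilinear form -/
noncomputable def dotB (K : Type) [Field K] (m : ℕ) : LinearMap.BilinForm K (Fin m → K) :=
  Matrix.toBilin' (1 : Matrix (Fin m) (Fin m) K)

lemma dotB_apply (v w : Fin m → K) : dotB K m v w = v ⬝ᵥ w := by
  simp [dotB, Matrix.toBilin'_apply']

lemma dotB_nondeg : (dotB K m).Nondegenerate := by
  constructor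
  · intro v hv
    exact dotProduct_eq_zero v (fun w => by simpa [dotB_apply] using hv w)
  · intro v hv
    exact dotProduct_eq_zero v (fun w => by simpa [dotB_apply, dotProduct_comm] using hv w)

lemma dotB_refl : (dotB K m).IsRefl := by
  intro v w h
  rwa [dotB_apply, dotProduct_comm, ← dotB_apply]

lemma vecMul_eq_sum_dot (A : Matrix (Fin m) (Fin m) K) (v y : Fin m → K) :
    y ⬝ᵥ (v ᵥ* A) = v ⬝ᵥ (A *ᵥ y) := by
  rw [dotProduct_mulVec, dotProduct_comm]

lemma orth_range (A : Matrix (Fin m) (Fin m) K) :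
    (dotB K m).orthogonal (LinearMap.range A.mulVecLin) = LinearMap.ker (Aᵀ).mulVecLin := by
  ext v
  simp only [LinearMap.BilinForm.mem_orthogonal_iff, LinearMap.BilinForm.IsOrtho,
    LinearMap.mem_ker, Matrix.mulVecLin_apply, Matrix.mulVec_transpose]
  constructor
  · intro hv
    refine dotProduct_eq_zero _ (fun y => ?_)
    have h1 := hv (A *ᵥ y) ⟨y, by simp [Matrix.mulVecLin_apply]⟩
    rw [dotB_apply] at h1
    rw [dotProduct_comm, vecMul_eq_sum_dot, dotProduct_comm]
    exact h1
  · rintro hv n ⟨y, rfl⟩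
    rw [dotB_apply, Matrix.mulVecLin_apply, dotProduct_comm, ← vecMul_eq_sum_dot, hv]
    simp

lemma exists_ker_dot {A : Matrix (Fin m) (Fin m) K} {b : Fin m → K}
    (hb : b ∉ LinearMap.range A.mulVecLin) :
    ∃ y : Fin m → K, (Aᵀ) *ᵥ y = 0 ∧ b ⬝ᵥ y ≠ 0 := by
  have key : LinearMap.range A.mulVecLin
      = (dotB K m).orthogonal (LinearMap.ker (Aᵀ).mulVecLin) := by
    rw [← orth_range A, LinearMap.BilinForm.orthogonal_orthogonal dotB_nondeg dotB_refl]
  rw [key] at hb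
  simp only [LinearMap.BilinForm.mem_orthogonal_iff, LinearMap.BilinForm.IsOrtho,
    not_forall] at hb
  obtain ⟨y, hy, hby⟩ := hb
  refine ⟨y, ?_, ?_⟩
  · simpa [LinearMap.mem_ker, Matrix.mulVecLin_apply, Matrix.mulVec_transpose] using hy
  · intro h
    apply hby
    rw [dotB_apply, dotProduct_comm]
    exact h


def bmat (b : Fin m → K) (A : Matrix (Fin m) (Fin m) K) : Matrix (Fin (m+1)) (Fin (m+1)) K :=
  Matrix.of (Fin.cons (Fin.cons 0 b) (fun i => Fin.cons (-(b i)) (A i)))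

lemma bmat_mulVec (b : Fin m → K) (A : Matrix (Fin m) (Fin m) K) (α : K) (y : Fin m → K) :
    (bmat b A) *ᵥ (Fin.cons α y) = Fin.cons (b ⬝ᵥ y) ((-α) • b + A *ᵥ y) := by
  funext k
  refine Fin.cases ?_ (fun i => ?_) k
  · simp [bmat, Matrix.mulVec, dotProduct, Fin.sum_univ_succ]
  · simp [bmat, Matrix.mulVec, dotProduct, Fin.sum_univ_succ]
    ring

@[simp] lemma bmat_apply_zero_zero (b : Fin m → K) (A : Matrix (Fin m) (Fin m) K) :
    bmat b A 0 0 = 0 := rfl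
@[simp] lemma bmat_apply_zero_succ (b : Fin m → K) (A : Matrix (Fin m) (Fin m) K) (j : Fin m) :
    bmat b A 0 j.succ = b j := rfl
@[simp] lemma bmat_apply_succ_zero (b : Fin m → K) (A : Matrix (Fin m) (Fin m) K) (i : Fin m) :
    bmat b A i.succ 0 = -(b i) := rfl
@[simp] lemma bmat_apply_succ_succ (b : Fin m → K) (A : Matrix (Fin m) (Fin m) K) (i j : Fin m) :
    bmat b A i.succ j.succ = A i j := rfl

open Module

lemma mulVec_dot_swap (A : Matrix (Fin m) (Fin m) K) (x y : Fin m → K) :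
    (A *ᵥ x) ⬝ᵥ y = x ⬝ᵥ (Aᵀ *ᵥ y) := by
  rw [dotProduct_comm, dotProduct_mulVec, Matrix.mulVec_transpose, dotProduct_comm]

lemma ker_funLeft_succ :
    LinearMap.ker (LinearMap.funLeft K K (Fin.succ : Fin m → Fin (m+1)))
      = Submodule.span K {(Fin.cons 1 0 : Fin (m+1) → K)} := by
  ext v
  simp only [LinearMap.mem_ker, Submodule.mem_span_singleton]
  constructor
  · intro hv
    refine ⟨v 0, ?_⟩
    funext k
    refine Fin.cases ?_ (fun i => ?_) k
    · simp
    · have : v i.succ = 0 := congrFun hv i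
      simp [this]
  · rintro ⟨c, rfl⟩
    funext i
    simp [LinearMap.funLeft_apply]

lemma finrank_ker_funLeft_succ :
    finrank K (LinearMap.ker (LinearMap.funLeft K K (Fin.succ : Fin m → Fin (m+1)))) = 1 := by
  rw [ker_funLeft_succ, finrank_span_singleton]
  intro h
  have := congrFun h 0
  simp at this

lemma range_pi_comp (b : Fin m → K) (A : Matrix (Fin m) (Fin m) K) :
    LinearMap.range ((LinearMap.funLeft K K (Fin.succ : Fin m → Fin (m+1))).comp
        (bmat b A).mulVecLin)
      = Submodule.span K {b} ⊔ LinearMap.range A.mulVecLin := by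
  ext w
  constructor
  · rintro ⟨z, rfl⟩
    rw [LinearMap.comp_apply, Matrix.mulVecLin_apply, ← Fin.cons_self_tail z, bmat_mulVec]
    have : (LinearMap.funLeft K K (Fin.succ : Fin m → Fin (m+1)))
        (Fin.cons (b ⬝ᵥ Fin.tail z) ((-(z 0)) • b + A *ᵥ Fin.tail z))
        = (-(z 0)) • b + A *ᵥ Fin.tail z := by
      funext i
      simp [LinearMap.funLeft_apply]
    rw [this]
    exact Submodule.add_mem_sup
      (Submodule.smul_mem _ _ (Submodule.mem_span_singleton_self b))
      ⟨Fin.tail z, rfl⟩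
  · intro hw
    obtain ⟨u, hu, v, hv, rfl⟩ := Submodule.mem_sup.1 hw
    obtain ⟨c, rfl⟩ := Submodule.mem_span_singleton.1 hu
    obtain ⟨y, rfl⟩ := hv
    refine ⟨Fin.cons (-c) y, ?_⟩
    rw [LinearMap.comp_apply, Matrix.mulVecLin_apply, bmat_mulVec]
    funext i
    simp [LinearMap.funLeft_apply, Matrix.mulVecLin_apply]

lemma rank_bmat_of_mem {A : Matrix (Fin m) (Fin m) K} (hA : IsSkewSym A) {b : Fin m → K}
    (hb : b ∈ LinearMap.range A.mulVecLin) :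
    (bmat b A).rank = A.rank := by
  obtain ⟨x, hx⟩ := hb
  set π := LinearMap.funLeft K K (Fin.succ : Fin m → Fin (m+1)) with hπ
  set V := LinearMap.range (bmat b A).mulVecLin with hV
  have hrank : (bmat b A).rank = finrank K V := rfl
  have h1 := LinearMap.finrank_range_add_finrank_ker (π.comp V.subtype)
  have hrange : LinearMap.range (π.comp V.subtype)
      = LinearMap.range (π.comp (bmat b A).mulVecLin) := by
    rw [LinearMap.range_comp, LinearMap.range_comp, Submodule.range_subtype]
  have hrange2 : LinearMap.range (π.comp V.subtype) = LinearMap.range A.mulVecLin := by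
    rw [hrange, range_pi_comp]
    exact sup_eq_right.2 (Submodule.span_le.2 (Set.singleton_subset_iff.2 ⟨x, hx⟩))
  have hker : LinearMap.ker (π.comp V.subtype) = ⊥ := by
    rw [LinearMap.ker_eq_bot']
    rintro ⟨v, hv⟩ h
    obtain ⟨z, hz⟩ := hv
    have hπv : ∀ i : Fin m, v i.succ = 0 := by
      intro i
      exact congrFun h i
    have hz' : (bmat b A) *ᵥ z = v := hz
    rw [← Fin.cons_self_tail z, bmat_mulVec] at hz'
    have htail : (-(z 0)) • b + A *ᵥ Fin.tail z = 0 := by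
      funext i
      have := congrFun hz' i.succ
      rw [Fin.cons_succ] at this
      rw [this]
      exact hπv i
    have hAy : A *ᵥ Fin.tail z = (z 0) • b := by
      have := congrArg (fun w => (z 0) • b + w) htail
      simpa [← add_assoc, add_comm, add_left_comm, smul_smul] using
        (by linear_combination (norm := module) htail : A *ᵥ Fin.tail z = (z 0) • b)
    have hhead : b ⬝ᵥ Fin.tail z = 0 := by
      have e1 : b ⬝ᵥ Fin.tail z = x ⬝ᵥ (Aᵀ *ᵥ Fin.tail z) := by
        rw [← hx, Matrix.mulVecLin_apply, mulVec_dot_swap]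
      rw [e1, hA.1, Matrix.neg_mulVec, dotProduct_neg, hAy, dotProduct_smul,
        smul_eq_mul]
      have : x ⬝ᵥ b = 0 := by
        rw [← hx, Matrix.mulVecLin_apply]
        exact skew_dot hA x
      rw [this, mul_zero, neg_zero]
    have hv0 : v = 0 := by
      funext k
      refine Fin.cases ?_ (fun i => hπv i) k
      have := congrFun hz' (0 : Fin (m+1))
      rw [Fin.cons_zero] at this
      simp [← this, hhead]
    exact Subtype.ext hv0
  rw [hrange2, hker, finrank_bot, add_zero] at h1
  rw [hrank, ← h1]
  rfl

lemma rank_bmat_of_not_mem {A : Matrix (Fin m) (Fin m) K} (hA : IsSkewSym A) {b : Fin m → K}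
    (hb : b ∉ LinearMap.range A.mulVecLin) :
    (bmat b A).rank = A.rank + 2 := by
  set π := LinearMap.funLeft K K (Fin.succ : Fin m → Fin (m+1)) with hπ
  set V := LinearMap.range (bmat b A).mulVecLin with hV
  have hrank : (bmat b A).rank = finrank K V := rfl
  have h1 := LinearMap.finrank_range_add_finrank_ker (π.comp V.subtype)
  have hrange : LinearMap.range (π.comp V.subtype)
      = Submodule.span K {b} ⊔ LinearMap.range A.mulVecLin := by
    rw [LinearMap.range_comp, Submodule.range_subtype, hV, ← LinearMap.range_comp,
      range_pi_comp]
  have hbne : b ≠ 0 := fun h => hb (h ▸ Submodule.zero_mem _)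
  have hinf : Submodule.span K {b} ⊓ LinearMap.range A.mulVecLin = ⊥ := by
    rw [eq_bot_iff]
    rintro w ⟨hw1, hw2⟩
    obtain ⟨c, rfl⟩ := Submodule.mem_span_singleton.1 hw1
    rcases eq_or_ne c 0 with rfl | hc
    · simp
    · exfalso
      apply hb
      have : b = c⁻¹ • (c • b) := by rw [smul_smul, inv_mul_cancel₀ hc, one_smul]
      rw [this]
      exact Submodule.smul_mem _ _ hw2
  have hrangedim : finrank K (LinearMap.range (π.comp V.subtype)) = A.rank + 1 := by
    rw [hrange]
    have := Submodule.finrank_sup_add_finrank_inf_eq (Submodule.span K {b})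
      (LinearMap.range A.mulVecLin)
    rw [hinf, finrank_bot, add_zero, finrank_span_singleton hbne] at this
    rw [this]
    rw [Matrix.rank]
    omega
  have hkerdim : finrank K (LinearMap.ker (π.comp V.subtype)) = 1 := by
    have hle : finrank K (LinearMap.ker (π.comp V.subtype)) ≤ 1 := by
      have hmap : Submodule.map V.subtype (LinearMap.ker (π.comp V.subtype))
          ≤ LinearMap.ker π := by
        rintro w ⟨⟨v, hv⟩, hk, rfl⟩
        exact hk
      calc finrank K (LinearMap.ker (π.comp V.subtype))
          = finrank K (Submodule.map V.subtype (LinearMap.ker (π.comp V.subtype))) :=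
            (Submodule.finrank_map_subtype_eq V _).symm
        _ ≤ finrank K (LinearMap.ker π) := Submodule.finrank_mono hmap
        _ = 1 := finrank_ker_funLeft_succ
    have hge : 1 ≤ finrank K (LinearMap.ker (π.comp V.subtype)) := by
      obtain ⟨y, hy1, hy2⟩ := exists_ker_dot hb
      have hAy : A *ᵥ y = 0 := by
        have h' : (-A) *ᵥ y = 0 := by rw [← hA.1]; exact hy1
        rw [Matrix.neg_mulVec, neg_eq_zero] at h'
        exact h'
      set v : Fin (m+1) → K := (bmat b A) *ᵥ (Fin.cons 0 y) with hvdef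
      have hvV : v ∈ V := ⟨Fin.cons 0 y, rfl⟩
      have hvval : v = Fin.cons (b ⬝ᵥ y) 0 := by
        rw [hvdef, bmat_mulVec, hAy]
        simp
      have hker : (⟨v, hvV⟩ : V) ∈ LinearMap.ker (π.comp V.subtype) := by
        rw [LinearMap.mem_ker]
        funext i
        show v i.succ = 0
        rw [hvval, Fin.cons_succ]
        rfl
      have hne : (⟨v, hvV⟩ : V) ≠ 0 := by
        intro h
        apply hy2
        have : v 0 = 0 := by
          rw [show v = 0 from congrArg Subtype.val h]
          rfl
        rwa [hvval, Fin.cons_zero] at this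
      by_contra hcon
      push_neg at hcon
      interval_cases h : finrank K (LinearMap.ker (π.comp V.subtype))
      · have : LinearMap.ker (π.comp V.subtype) = ⊥ := Submodule.finrank_eq_zero.1 h
        rw [this] at hker
        exact hne (Submodule.mem_bot _ |>.1 hker)
    omega
  rw [hrangedim, hkerdim] at h1
  rw [hrank, ← h1]

lemma skew_zero : IsSkewSym (0 : Matrix (Fin m) (Fin m) K) := by
  constructor
  · simp
  · simp

lemma eq_zero_of_rank_zero {A : Matrix (Fin m) (Fin m) K} (h : A.rank = 0) : A = 0 := by
  have hb : LinearMap.range A.mulVecLin = ⊥ := Submodule.finrank_eq_zero.1 h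
  ext i j
  have hmem : A *ᵥ Pi.single j 1 ∈ LinearMap.range A.mulVecLin := ⟨Pi.single j 1, rfl⟩
  rw [hb, Submodule.mem_bot] at hmem
  have := congrFun hmem i
  rw [Matrix.mulVec_single] at this
  simpa using this

lemma na_zero_eq : na K 0 m = 1 := by
  rw [na, Nat.card_eq_one_iff_unique]
  constructor
  · constructor
    rintro ⟨A, -, hA2⟩ ⟨B, -, hB2⟩
    exact Subtype.ext ((eq_zero_of_rank_zero hA2).trans (eq_zero_of_rank_zero hB2).symm)
  · exact ⟨⟨0, skew_zero, Matrix.rank_zero⟩⟩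

lemma na_of_big (r : ℕ) (h : m < r) : na K r m = 0 := by
  rw [na, Nat.card_eq_zero]
  left
  refine ⟨?_⟩
  rintro ⟨A, -, hA2⟩
  have := A.rank_le_card_width
  rw [Fintype.card_fin, hA2] at this
  omega

lemma isSkewSym_bmat {A : Matrix (Fin m) (Fin m) K} (hA : IsSkewSym A) (b : Fin m → K) :
    IsSkewSym (bmat b A) := by
  constructor
  · funext i j
    simp only [Matrix.transpose_apply, Matrix.neg_apply]
    refine Fin.cases ?_ (fun i' => ?_) i
    · refine Fin.cases ?_ (fun j' => ?_) j
      · simp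
      · simp
    · refine Fin.cases ?_ (fun j' => ?_) j
      · simp
      · simpa using skew_apply hA i' j'
  · intro i
    refine Fin.cases ?_ (fun i' => ?_) i
    · simp
    · simp [hA.2]

lemma isSkewSym_sub {A : Matrix (Fin (m+1)) (Fin (m+1)) K} (hA : IsSkewSym A) :
    IsSkewSym (A.submatrix Fin.succ Fin.succ) := by
  constructor
  · funext i j
    simp only [Matrix.transpose_apply, Matrix.submatrix_apply, Matrix.neg_apply]
    exact skew_apply hA i.succ j.succ
  · intro i
    simp [Matrix.submatrix_apply, hA.2]

lemma bmat_recon {A : Matrix (Fin (m+1)) (Fin (m+1)) K} (hA : IsSkewSym A) :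
    bmat (fun j => A 0 j.succ) (A.submatrix Fin.succ Fin.succ) = A := by
  funext i j
  refine Fin.cases ?_ (fun i' => ?_) i
  · refine Fin.cases ?_ (fun j' => ?_) j
    · simp [hA.2]
    · simp
  · refine Fin.cases ?_ (fun j' => ?_) j
    · simp [skew_apply hA 0 i'.succ]
    · simp

/-- decomposition equivalence -/
def skewEquiv (n : ℕ) :
    {A : Matrix (Fin (m+1)) (Fin (m+1)) K // IsSkewSym A ∧ A.rank = n}
      ≃ {p : Matrix (Fin m) (Fin m) K × (Fin m → K) //
          IsSkewSym p.1 ∧ (bmat p.2 p.1).rank = n} where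
  toFun := fun ⟨A, hA, hr⟩ => ⟨(A.submatrix Fin.succ Fin.succ, fun j => A 0 j.succ),
    isSkewSym_sub hA, by rw [bmat_recon hA]; exact hr⟩
  invFun := fun ⟨(A', b), hA', hrk⟩ => ⟨bmat b A', isSkewSym_bmat hA' b, hrk⟩
  left_inv := by
    rintro ⟨A, hA, hr⟩
    exact Subtype.ext (bmat_recon hA)
  right_inv := by
    rintro ⟨⟨A', b⟩, hA', hrk⟩
    apply Subtype.ext
    apply Prod.ext
    · funext i j
      simp [Matrix.submatrix_apply]
    · funext j
      simp

lemma na_succ_rec [Fintype K] (r : ℕ) (hr : 0 < r) :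
    na K (2*r) (m+1) = na K (2*r) m * (Fintype.card K)^(2*r)
      + na K (2*r-2) m * ((Fintype.card K)^m - (Fintype.card K)^(2*r-2)) := by
  classical
  set q := Fintype.card K with hq
  rw [na, Nat.card_congr (skewEquiv (2*r)),
    Nat.card_congr (Equiv.subtypeProdEquivSigmaSubtype
      (fun (A' : Matrix (Fin m) (Fin m) K) (b : Fin m → K) =>
        IsSkewSym A' ∧ (bmat b A').rank = 2*r)),
    Nat.card_eq_fintype_card, Fintype.card_sigma]
  simp_rw [← Nat.card_eq_fintype_card]
  have hpoint : ∀ A' : Matrix (Fin m) (Fin m) K,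
      Nat.card {b : Fin m → K // IsSkewSym A' ∧ (bmat b A').rank = 2*r}
        = (if IsSkewSym A' ∧ A'.rank = 2*r then q^(2*r) else 0)
          + (if IsSkewSym A' ∧ A'.rank = 2*r-2 then q^m - q^(2*r-2) else 0) := by
    intro A'
    by_cases hA' : IsSkewSym A'
    · by_cases h1 : A'.rank = 2*r
      · rw [if_pos ⟨hA', h1⟩, if_neg (by rintro ⟨-, h2⟩; omega), add_zero]
        have hiff : ∀ b : Fin m → K,
            (IsSkewSym A' ∧ (bmat b A').rank = 2*r) ↔ b ∈ LinearMap.range A'.mulVecLin := by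
          intro b
          constructor
          · rintro ⟨-, hbr⟩
            by_contra hmem
            rw [rank_bmat_of_not_mem hA' hmem] at hbr
            omega
          · intro hmem
            exact ⟨hA', by rw [rank_bmat_of_mem hA' hmem, h1]⟩
        rw [Nat.card_congr (Equiv.subtypeEquivRight hiff), Nat.card_eq_fintype_card]
        have hc : Fintype.card {b : Fin m → K // b ∈ LinearMap.range A'.mulVecLin}
            = q ^ (Module.finrank K (LinearMap.range A'.mulVecLin)) := card_eq_pow_finrank
        rw [hc]
        congr 1
      · by_cases h2 : A'.rank = 2*r-2
        · rw [if_neg (by rintro ⟨-, h⟩; exact h1 h), if_pos ⟨hA', h2⟩, zero_add]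
          have hiff : ∀ b : Fin m → K,
              (IsSkewSym A' ∧ (bmat b A').rank = 2*r) ↔ ¬(b ∈ LinearMap.range A'.mulVecLin) := by
            intro b
            constructor
            · rintro ⟨-, hbr⟩ hmem
              rw [rank_bmat_of_mem hA' hmem] at hbr
              omega
            · intro hmem
              refine ⟨hA', ?_⟩
              rw [rank_bmat_of_not_mem hA' hmem, h2]
              omega
          rw [Nat.card_congr (Equiv.subtypeEquivRight hiff), Nat.card_eq_fintype_card,
            Fintype.card_subtype_compl]
          congr 1
          · rw [hq]
            simp [Fintype.card_fun]
          · have hc : Fintype.card {b : Fin m → K // b ∈ LinearMap.range A'.mulVecLin}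
              = q ^ (Module.finrank K (LinearMap.range A'.mulVecLin)) := card_eq_pow_finrank
            rw [hc]
            congr 1
        · rw [if_neg (by rintro ⟨-, h⟩; exact h1 h), if_neg (by rintro ⟨-, h⟩; exact h2 h),
            add_zero]
          rw [Nat.card_eq_zero]
          left
          refine ⟨?_⟩
          rintro ⟨b, -, hbr⟩
          by_cases hmem : b ∈ LinearMap.range A'.mulVecLin
          · rw [rank_bmat_of_mem hA' hmem] at hbr
            exact h1 hbr
          · rw [rank_bmat_of_not_mem hA' hmem] at hbr
            omega
    · rw [if_neg (fun h => hA' h.1), if_neg (fun h => hA' h.1), add_zero]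
      rw [Nat.card_eq_zero]
      left
      exact ⟨fun x => hA' x.2.1⟩
  simp_rw [hpoint]
  rw [Finset.sum_add_distrib]
  congr 1
  · rw [← Finset.sum_filter, Finset.sum_const, smul_eq_mul, na, Nat.card_eq_fintype_card,
      Fintype.card_subtype]
  · rw [← Finset.sum_filter, Finset.sum_const, smul_eq_mul, na, Nat.card_eq_fintype_card,
      Fintype.card_subtype]

lemma cast_prod_sub (f : ℕ → ℕ) (hf : ∀ i, 1 ≤ f i) (n : ℕ) :
    ((∏ i ∈ Finset.range n, (f i - 1) : ℕ) : ℤ)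
      = ∏ i ∈ Finset.range n, ((f i : ℤ) - 1) := by
  rw [Nat.cast_prod]
  refine Finset.prod_congr rfl (fun i _ => ?_)
  rw [Nat.cast_sub (hf i)]
  simp

lemma master (K : Type) [Field K] [Fintype K] :
    ∀ (m r : ℕ),
    (na K (2*r) m : ℤ) * ∏ i ∈ Finset.range r, ((Fintype.card K : ℤ)^(2*(r-i)) - 1)
      = (Fintype.card K : ℤ)^(r*(r-1))
          * ∏ i ∈ Finset.range (2*r), ((Fintype.card K : ℤ)^(m-i) - 1) := by
  intro m
  induction m with
  | zero =>
    intro r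
    match r with
    | 0 => simp [na_zero_eq]
    | t+1 =>
      rw [na_of_big _ (by omega)]
      rw [Finset.prod_eq_zero (Finset.mem_range.2 (show 0 < 2*(t+1) by omega)) (by simp)]
      simp
  | succ m IH =>
    intro r
    match r with
    | 0 => simp [na_zero_eq]
    | t+1 =>
      by_cases hbig : m + 1 < 2*(t+1)
      · rw [na_of_big _ hbig]
        rw [Finset.prod_eq_zero (Finset.mem_range.2 hbig) (by simp)]
        simp
      · push_neg at hbig
        obtain ⟨s, hs⟩ : ∃ s, m = 2*t+1+s := ⟨m - (2*t+1), by omega⟩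
        subst hs
        set x : ℤ := (Fintype.card K : ℤ) with hx
        have hq1 : 1 ≤ Fintype.card K := Fintype.card_pos
        have hrec := na_succ_rec (K := K) (m := 2*t+1+s) (t+1) (by omega)
        rw [show 2*(t+1)-2 = 2*t from by omega] at hrec
        have hrecZ : (na K (2*(t+1)) (2*t+1+s+1) : ℤ)
            = (na K (2*(t+1)) (2*t+1+s) : ℤ) * x^(2*(t+1))
              + (na K (2*t) (2*t+1+s) : ℤ) * (x^(2*t+1+s) - x^(2*t)) := by
          rw [hrec]
          push_cast [Nat.cast_sub (Nat.pow_le_pow_right hq1 (show 2*t ≤ 2*t+1+s by omega))]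
          ring
        have hD : (∏ i ∈ Finset.range (t+1), (x^(2*((t+1)-i)) - 1))
            = (x^(2*(t+1)) - 1) * ∏ i ∈ Finset.range t, (x^(2*(t-i)) - 1) := by
          rw [Finset.prod_range_succ']
          have h1 : ∀ i ∈ Finset.range t,
              (x^(2*((t+1)-(i+1))) - 1) = (x^(2*(t-i)) - 1) := fun i _ => by
            rw [show 2*((t+1)-(i+1)) = 2*(t-i) from by omega]
          rw [Finset.prod_congr rfl h1]
          rw [show (t+1)-0 = t+1 from by omega]
          ring
        have hP1 : (∏ i ∈ Finset.range (2*(t+1)), (x^((2*t+1+s+1)-i) - 1))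
            = (x^(2*t+1+s+1) - 1) * ∏ i ∈ Finset.range (2*t+1), (x^((2*t+1+s)-i) - 1) := by
          rw [show 2*(t+1) = (2*t+1)+1 from by omega, Finset.prod_range_succ']
          have h1 : ∀ i ∈ Finset.range (2*t+1),
              (x^((2*t+1+s+1)-(i+1)) - 1) = (x^((2*t+1+s)-i) - 1) := fun i _ => by
            rw [show (2*t+1+s+1)-(i+1) = (2*t+1+s)-i from by omega]
          rw [Finset.prod_congr rfl h1]
          rw [show (2*t+1+s+1)-0 = 2*t+1+s+1 from by omega]
          ring
        have hP2 : (∏ i ∈ Finset.range (2*t+1), (x^((2*t+1+s)-i) - 1))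
            = (∏ i ∈ Finset.range (2*t), (x^((2*t+1+s)-i) - 1)) * (x^(s+1) - 1) := by
          rw [Finset.prod_range_succ]
          rw [show (2*t+1+s)-(2*t) = s+1 from by omega]
        have hP3 : (∏ i ∈ Finset.range (2*(t+1)), (x^((2*t+1+s)-i) - 1))
            = ((∏ i ∈ Finset.range (2*t), (x^((2*t+1+s)-i) - 1)) * (x^(s+1) - 1))
              * (x^s - 1) := by
          rw [show 2*(t+1) = (2*t+1)+1 from by omega, Finset.prod_range_succ,
            show (2*t+1+s)-(2*t+1) = s from by omega, Finset.prod_range_succ,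
            show (2*t+1+s)-(2*t) = s+1 from by omega]
        have hexp : (t+1)*t = t*(t-1) + 2*t := by
          cases t with
          | zero => rfl
          | succ n => simp only [Nat.succ_sub_one]; ring
        have hpow : x^((t+1)*t) = x^(t*(t-1)) * x^(2*t) := by
          rw [← pow_add, hexp]
        have IH1 := IH (t+1)
        simp only [Nat.add_sub_cancel] at IH1 ⊢
        have IH2 := IH t
        rw [hD, hP3, hpow] at IH1
        rw [hrecZ, hD, hP1, hP2, hpow]
        linear_combination x^(2*(t+1)) * IH1
          + ((x^(2*t+1+s) - x^(2*t)) * (x^(2*(t+1)) - 1)) * IH2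

end SkewCount

theorem stmt8 (K : Type) [Field K] [Fintype K] (m r : ℕ) (hr : 0 < r) (hrm : 2*r ≤ m) :
    na K (2*r) m * ∏ i ∈ Finset.range r, (Fintype.card K ^ (2*(r - i)) - 1)
      = Fintype.card K ^ (r*(r-1)) *
          ∏ i ∈ Finset.range (2*r), (Fintype.card K ^ (m - i) - 1) := by
  have h := SkewCount.master K m r
  have hq0 : 0 < Fintype.card K := Fintype.card_pos
  apply @Nat.cast_injective ℤ _ _
  rw [Nat.cast_mul, Nat.cast_mul, Nat.cast_pow,
    SkewCount.cast_prod_sub _ (fun i => Nat.one_le_pow _ _ hq0) r,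
    SkewCount.cast_prod_sub _ (fun i => Nat.one_le_pow _ _ hq0) (2*r)]
  push_cast
  exact h
end
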